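/- arXiv:2509.05860 — 2 statements merged into one kernel-verified Lean document; each statement's English description precedes it below -/
import Mathlib

section
/- Let X be a real-valued random variable on a probability space with E[X] = 0, and let δ > 0 be such that e^{δ|X|} is integrable. Then for every real number t with |t| ≤ δ, one has E[e^{tX}] ≤ 1 + (t/δ)² · E[e^{δ|X|}]. -/
/-!
For `|c| ≤ 1`, every term of order `≥ 2` in the exponential series of `c * w` is at most `c²`
times the corresponding term for `|w|`, whence `e^{cw} ≤ 1 + cw + c² e^{|w|}`. With `c = t / δ`
and `w = δ X` this bounds `e^{tX}` pointwise; integrating, the linear term vanishes as `E[X] = 0`.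
-/

open MeasureTheory
open scoped Nat

lemma Real.hasSum_exp_sub_one_sub (x : ℝ) :
    HasSum (fun n : ℕ => x ^ (n + 2) / (n + 2)!) (Real.exp x - 1 - x) := by
  have h := NormedSpace.expSeries_div_hasSum_exp x
  rw [← Real.exp_eq_exp_ℝ, ← hasSum_nat_add_iff' 2] at h
  simpa [Finset.sum_range_succ, sub_sub] using h

lemma Real.exp_mul_le_one_add_mul_add_sq_mul_exp_abs {c : ℝ} (hc : |c| ≤ 1) (w : ℝ) :
    Real.exp (c * w) ≤ 1 + c * w + c ^ 2 * Real.exp |w| := by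
  have hterm (n : ℕ) : (c * w) ^ (n + 2) / (n + 2)! ≤ c ^ 2 * (|w| ^ (n + 2) / (n + 2)!) := by
    rw [← mul_div_assoc]
    gcongr
    calc (c * w) ^ (n + 2) ≤ |c * w| ^ (n + 2) := (le_abs_self _).trans (abs_pow _ _).le
      _ = c ^ 2 * (|c| ^ n * |w| ^ (n + 2)) := by rw [abs_mul, mul_pow, ← sq_abs c]; ring
      _ ≤ c ^ 2 * |w| ^ (n + 2) := by
          gcongr
          exact mul_le_of_le_one_left (by positivity) (pow_le_one₀ (abs_nonneg c) hc)
  have hsum := hasSum_le hterm (Real.hasSum_exp_sub_one_sub (c * w))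
    ((Real.hasSum_exp_sub_one_sub |w|).mul_left (c ^ 2))
  nlinarith [abs_nonneg w, sq_nonneg c]

lemma Real.exp_mul_le_one_add_mul_add_sq_div_mul_exp_mul_abs {t δ : ℝ} (hδ : 0 < δ)
    (ht : |t| ≤ δ) (x : ℝ) :
    Real.exp (t * x) ≤ 1 + t * x + (t / δ) ^ 2 * Real.exp (δ * |x|) := by
  have hc : |t / δ| ≤ 1 := by
    rw [abs_div, abs_of_pos hδ]
    exact div_le_one_of_le₀ ht hδ.le
  have h := Real.exp_mul_le_one_add_mul_add_sq_mul_exp_abs hc (δ * x)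
  have hcw : t / δ * (δ * x) = t * x := by field_simp
  rwa [hcw, abs_mul, abs_of_pos hδ] at h

lemma integrable_exp_mul_of_integrable_exp_mul_abs {Ω : Type*} [MeasurableSpace Ω]
    {P : Measure Ω} {X : Ω → ℝ} (hX : AEStronglyMeasurable X P) {t δ : ℝ} (ht : |t| ≤ δ)
    (hexp : Integrable (fun ω => Real.exp (δ * |X ω|)) P) :
    Integrable (fun ω => Real.exp (t * X ω)) P := by
  refine hexp.mono' (by fun_prop) (.of_forall fun ω => ?_)
  rw [Real.norm_eq_abs, Real.abs_exp, Real.exp_le_exp]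
  calc t * X ω ≤ |t| * |X ω| := by rw [← abs_mul]; exact le_abs_self _
    _ ≤ δ * |X ω| := by gcongr

/-- If `E[X] = 0` and `e^{δ|X|}` is integrable for some `δ > 0`, then for every
real `t` with `|t| ≤ δ`, `E[e^{tX}] ≤ 1 + (t/δ)² E[e^{δ|X|}]`. -/
theorem stmt_0 {Ω : Type*} [MeasurableSpace Ω] (P : Measure Ω) [IsProbabilityMeasure P]
    (X : Ω → ℝ) (hXint : Integrable X P) (hXmean : ∫ ω, X ω ∂P = 0)
    (δ : ℝ) (hδ : 0 < δ)
    (hexp : Integrable (fun ω => Real.exp (δ * |X ω|)) P)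
    (t : ℝ) (ht : |t| ≤ δ) :
    ∫ ω, Real.exp (t * X ω) ∂P
      ≤ 1 + (t / δ) ^ 2 * ∫ ω, Real.exp (δ * |X ω|) ∂P := by
  have hlin : Integrable (fun ω => 1 + t * X ω) P := (integrable_const 1).add (hXint.const_mul t)
  calc ∫ ω, Real.exp (t * X ω) ∂P
      ≤ ∫ ω, (1 + t * X ω + (t / δ) ^ 2 * Real.exp (δ * |X ω|)) ∂P :=
        integral_mono (integrable_exp_mul_of_integrable_exp_mul_abs hXint.1 ht hexp)
          (hlin.add (hexp.const_mul _))
          fun ω => Real.exp_mul_le_one_add_mul_add_sq_div_mul_exp_mul_abs hδ ht (X ω)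
    _ = 1 + (t / δ) ^ 2 * ∫ ω, Real.exp (δ * |X ω|) ∂P := by
        rw [integral_add hlin (hexp.const_mul _),
          integral_add (integrable_const 1) (hXint.const_mul t),
          integral_const, integral_const_mul, integral_const_mul, hXmean]
        simp
end

section
/- Let G be a sub-σ-algebra of F, let X be an integrable real random variable with E[X | G] = 0 almost surely, let δ > 0 and K ≥ 0 be constants with E[e^{δ|X|} | G] ≤ K almost surely. Then for every real t with |t| ≤ δ, one has E[e^{tX} | G] ≤ 1 + (t/δ)² K ≤ exp((t/δ)² K) almost surely. -/
open MeasureTheory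

lemma key_pt (δ t x : ℝ) (hδ : 0 < δ) (ht : |t| ≤ δ) :
    Real.exp (t * x) ≤ 1 + t * x + (t / δ) ^ 2 * Real.exp (δ * |x|) := by
  set c : ℝ := (t / δ) ^ 2 with hc
  have hc0 : 0 ≤ c := sq_nonneg _
  have exp_tsum : ∀ u : ℝ, Real.exp u = ∑' n : ℕ, u ^ n / n.factorial := by
    intro u
    rw [Real.exp_eq_exp_ℝ, NormedSpace.exp_eq_tsum_div]
  have split : ∀ u : ℝ, Real.exp u = 1 + u + ∑' n : ℕ, u ^ (n + 2) / (n + 2).factorial := by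
    intro u
    have hs := Real.summable_pow_div_factorial u
    have := Summable.sum_add_tsum_nat_add 2 hs
    rw [exp_tsum u, ← this]
    simp [Finset.sum_range_succ]
  have hsum1 : Summable (fun n : ℕ => (t * x) ^ (n + 2) / (n + 2).factorial) :=
    (summable_nat_add_iff 2).2 (Real.summable_pow_div_factorial (t * x))
  have hsum2 : Summable (fun n : ℕ => c * ((δ * |x|) ^ (n + 2) / (n + 2).factorial)) :=
    ((summable_nat_add_iff 2).2 (Real.summable_pow_div_factorial (δ * |x|))).mul_left c
  have termwise : ∀ n : ℕ, (t * x) ^ (n + 2) / (n + 2).factorial ≤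
      c * ((δ * |x|) ^ (n + 2) / (n + 2).factorial) := by
    intro n
    rw [mul_div_assoc']
    apply div_le_div_of_nonneg_right _ (by positivity)
    have h1 : (t * x) ^ (n + 2) ≤ |t| ^ (n + 2) * |x| ^ (n + 2) := by
      calc (t * x) ^ (n + 2) ≤ |(t * x) ^ (n + 2)| := le_abs_self _
        _ = |t| ^ (n + 2) * |x| ^ (n + 2) := by rw [abs_pow, abs_mul, mul_pow]
    refine h1.trans ?_
    have h2 : |t| ^ (n + 2) ≤ c * δ ^ (n + 2) := by
      have : |t| ^ (n + 2) = |t| ^ 2 * |t| ^ n := by ring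
      rw [this]
      have h3 : |t| ^ n ≤ δ ^ n := pow_le_pow_left₀ (abs_nonneg t) ht n
      have h4 : c * δ ^ (n + 2) = t ^ 2 * δ ^ n := by
        rw [hc, div_pow, pow_add, div_mul_eq_mul_div, div_eq_iff (by positivity)]
        ring
      rw [h4, sq_abs]
      exact mul_le_mul_of_nonneg_left h3 (sq_nonneg t)
    calc |t| ^ (n + 2) * |x| ^ (n + 2) ≤ c * δ ^ (n + 2) * |x| ^ (n + 2) :=
          mul_le_mul_of_nonneg_right h2 (by positivity)
      _ = c * (δ * |x|) ^ (n + 2) := by rw [mul_pow]; ring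
  have y0 : 0 ≤ δ * |x| := by positivity
  have tail_le : (∑' n : ℕ, (t * x) ^ (n + 2) / (n + 2).factorial) ≤ c * Real.exp (δ * |x|) := by
    calc (∑' n : ℕ, (t * x) ^ (n + 2) / (n + 2).factorial)
        ≤ ∑' n : ℕ, c * ((δ * |x|) ^ (n + 2) / (n + 2).factorial) :=
          Summable.tsum_le_tsum termwise hsum1 hsum2
      _ = c * ∑' n : ℕ, (δ * |x|) ^ (n + 2) / (n + 2).factorial := tsum_mul_left
      _ ≤ c * Real.exp (δ * |x|) := by
          apply mul_le_mul_of_nonneg_left _ hc0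
          have := split (δ * |x|)
          nlinarith [Real.exp_pos (δ * |x|)]
  calc Real.exp (t * x) = 1 + t * x + ∑' n : ℕ, (t * x) ^ (n + 2) / (n + 2).factorial :=
        split (t * x)
    _ ≤ 1 + t * x + c * Real.exp (δ * |x|) := by linarith

/-- Conditional version of the exponential-moment inequality. If
`E[X | G] = 0` a.s. and `E[e^{δ|X|} | G] ≤ K` a.s. for constants `δ > 0`, `K ≥ 0`, then for
every real `t` with `|t| ≤ δ`, a.s. `E[e^{tX} | G] ≤ 1 + (t/δ)² K ≤ exp((t/δ)² K)`. -/
theorem stmt_2 {Ω : Type*} {F : MeasurableSpace Ω} (P : Measure Ω) [IsProbabilityMeasure P]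
    (G : MeasurableSpace Ω) (hG : G ≤ F)
    (X : Ω → ℝ) (hXint : Integrable X P)
    (hXcond : P[X | G] =ᵐ[P] 0)
    (δ K : ℝ) (hδ : 0 < δ) (hK : 0 ≤ K)
    (hexpint : Integrable (fun ω => Real.exp (δ * |X ω|)) P)
    (hexpbdd : ∀ᵐ ω ∂P, (P[fun ω => Real.exp (δ * |X ω|) | G]) ω ≤ K)
    (t : ℝ) (ht : |t| ≤ δ) :
    ∀ᵐ ω ∂P, (P[fun ω => Real.exp (t * X ω) | G]) ω ≤ 1 + (t / δ) ^ 2 * K ∧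
      1 + (t / δ) ^ 2 * K ≤ Real.exp ((t / δ) ^ 2 * K) := by
  set c : ℝ := (t / δ) ^ 2 with hc
  have hc0 : 0 ≤ c := sq_nonneg _
  set g : Ω → ℝ := fun ω => Real.exp (δ * |X ω|) with hg
  set f : Ω → ℝ := fun ω => Real.exp (t * X ω) with hf
  -- measurability and integrability of f
  have hfm : AEStronglyMeasurable[F] f P :=
    Real.continuous_exp.comp_aestronglyMeasurable (hXint.1.const_mul t)
  have hfg : ∀ ω, f ω ≤ g ω := by
    intro ω
    apply Real.exp_le_exp.2
    calc t * X ω ≤ |t * X ω| := le_abs_self _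
      _ = |t| * |X ω| := abs_mul _ _
      _ ≤ δ * |X ω| := mul_le_mul_of_nonneg_right ht (abs_nonneg _)
  have hfint : Integrable f P := by
    refine hexpint.mono' hfm (ae_of_all _ fun ω => ?_)
    rw [Real.norm_eq_abs, abs_of_pos (Real.exp_pos _)]
    exact hfg ω
  -- the dominating function
  have hint1 : Integrable (fun ω => 1 + t * X ω) P :=
    (integrable_const 1).add (hXint.const_mul t)
  have hint2 : Integrable (fun ω => c * g ω) P := hexpint.const_mul c
  have hle : f ≤ᵐ[P] ((fun ω => 1 + t * X ω) + fun ω => c * g ω) :=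
    ae_of_all _ fun ω => key_pt δ t (X ω) hδ ht
  have hmono := condExp_mono (m := G) hfint (hint1.add hint2) hle
  have hsplit : P[fun ω => (1 + t * X ω) + c * g ω | G]
      =ᵐ[P] P[fun ω => 1 + t * X ω | G] + P[fun ω => c * g ω | G] :=
    condExp_add hint1 hint2 G
  have hsplit1 : P[fun ω => 1 + t * X ω | G]
      =ᵐ[P] P[fun _ => (1 : ℝ) | G] + P[fun ω => t * X ω | G] :=
    condExp_add (integrable_const 1) (hXint.const_mul t) G
  have hconst : P[fun _ => (1 : ℝ) | G] = fun _ => (1 : ℝ) := condExp_const hG (1 : ℝ)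
  have hsmul : P[fun ω => t * X ω | G] =ᵐ[P] fun ω => t * (P[X | G]) ω := by
    have := condExp_smul (μ := P) (m := G) t X
    filter_upwards [this] with ω hω
    exact hω
  have hsmul2 : P[fun ω => c * g ω | G] =ᵐ[P] fun ω => c * (P[g | G]) ω := by
    have := condExp_smul (μ := P) (m := G) c g
    filter_upwards [this] with ω hω
    exact hω
  filter_upwards [hmono, hsplit, hsplit1, hsmul, hsmul2, hXcond, hexpbdd] with ω
    h1 h2 h3 h5 h6 h7 h8
  have h4 : (P[fun _ => (1 : ℝ) | G]) ω = 1 := by rw [hconst]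
  constructor
  · have h1' : (P[f | G]) ω ≤ (P[fun ω => 1 + t * X ω + c * g ω | G]) ω := h1
    simp only [Pi.add_apply] at h2 h3
    rw [h2, h3, h4, h5, h6, h7] at h1'
    have hck : c * (P[g | G]) ω ≤ c * K := mul_le_mul_of_nonneg_left h8 hc0
    simp only [Pi.zero_apply, mul_zero, add_zero] at h1'
    linarith
  · have := Real.add_one_le_exp (c * K)
    linarith
end
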